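/- arXiv:2508.07347 — 2 statements merged into one kernel-verified Lean document; each statement's English description precedes it below -/
import Mathlib

section
/- Let S be a maximal triangular subalgebra of B(H), let p ∈ lat(S), and let ξ be a nonzero vector with p ξ = 0. Then for every vector η in the range of p there exists a ∈ S with a ξ = η; that is, S ξ contains the range of p. -/
set_option maxHeartbeats 1000000
set_option synthInstance.maxHeartbeats 400000

open ContinuousLinearMap in
/-- The diagonal `S ∩ S*` of a subalgebra of `B(H)`. -/
def diagonal {H : Type*} [NormedAddCommGroup H] [InnerProductSpace ℂ H] [CompleteSpace H]
    (S : Subalgebra ℂ (H →L[ℂ] H)) : Set (H →L[ℂ] H) :=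
  {a | a ∈ S ∧ adjoint a ∈ S}

/-- A set of operators is maximal abelian in `B(H)` if it is commutative and contains
every operator commuting with all of its members. -/
def IsMaxAbelian {H : Type*} [NormedAddCommGroup H] [InnerProductSpace ℂ H]
    (D : Set (H →L[ℂ] H)) : Prop :=
  (∀ a ∈ D, ∀ b ∈ D, a * b = b * a) ∧
  (∀ b : H →L[ℂ] H, (∀ a ∈ D, a * b = b * a) → b ∈ D)

/-- A (unital) subalgebra of `B(H)` is triangular if its diagonal `S ∩ S*` is
maximal abelian in `B(H)`. -/
def IsTriangular {H : Type*} [NormedAddCommGroup H] [InnerProductSpace ℂ H] [CompleteSpace H]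
    (S : Subalgebra ℂ (H →L[ℂ] H)) : Prop :=
  IsMaxAbelian (diagonal S)

/-- `S` is maximal triangular if it is triangular and not properly contained in any
other triangular subalgebra. -/
def IsMaxTriangular {H : Type*} [NormedAddCommGroup H] [InnerProductSpace ℂ H] [CompleteSpace H]
    (S : Subalgebra ℂ (H →L[ℂ] H)) : Prop :=
  IsTriangular S ∧ ∀ T : Subalgebra ℂ (H →L[ℂ] H), IsTriangular T → S ≤ T → S = T

open ContinuousLinearMap in
/-- `p ∈ lat S`: `p` is an orthogonal projection with `a p = p a p` for all `a ∈ S`. -/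
def InLat {H : Type*} [NormedAddCommGroup H] [InnerProductSpace ℂ H] [CompleteSpace H]
    (S : Subalgebra ℂ (H →L[ℂ] H)) (p : H →L[ℂ] H) : Prop :=
  p * p = p ∧ adjoint p = p ∧ ∀ a ∈ S, a * p = p * a * p

/-!
Since `p ∈ lat(S)` is invariant for both `d` and `d*` when `d ∈ S ∩ S*`, it commutes with the
maximal abelian diagonal and hence lies in `S`. Invariance of `ran p` makes `S + p B(H) (1 - p)`
an algebra. If `t = s + p x (1 - p)` and `t*` both lie in it, then `p t (1 - p) = 0`, so
`p x (1 - p) = -p s (1 - p) ∈ S`: the larger algebra has the same diagonal, is triangular, and by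
maximality equals `S`. Hence `S ⊇ p B(H) (1 - p)`, and for `ξ ∈ ker p`, `η ∈ ran p` any operator
`x` with `x ξ = η` gives `p x (1 - p) ∈ S` mapping `ξ` to `η`.
-/

open ContinuousLinearMap

theorem IsSelfAdjoint.commute_of_mul_eq_mul_mul {A : Type*} [Semigroup A] [StarMul A] {a p : A}
    (hp : IsSelfAdjoint p) (ha : a * p = p * a * p) (ha' : star a * p = p * star a * p) :
    Commute a p := by
  have hpa : p * a = p * a * p := by
    simpa only [star_mul, star_star, hp.star_eq, mul_assoc] using congrArg star ha'
  exact ha.trans hpa.symm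

theorem one_sub_mul_mul_eq_zero {A : Type*} [Ring A] {a p : A} (ha : a * p = p * a * p) :
    (1 - p) * a * p = 0 := by
  rw [sub_mul, one_mul, sub_mul, ha, sub_self]

theorem exists_continuousLinearMap_apply_eq {𝕜 E F : Type*} [RCLike 𝕜] [NormedAddCommGroup E]
    [InnerProductSpace 𝕜 E] [SeminormedAddCommGroup F] [NormedSpace 𝕜 F] {ξ : E} (hξ : ξ ≠ 0)
    (η : F) : ∃ x : E →L[𝕜] F, x ξ = η :=
  ⟨(inner 𝕜 ξ ξ)⁻¹ • InnerProductSpace.rankOne 𝕜 η ξ, by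
    simp [smul_smul, hξ]⟩

namespace Subalgebra

variable {R A : Type*} [CommRing R] [Ring A] [Algebra R A] {S : Subalgebra R A} {p : A}

def addCorner (S : Subalgebra R A) (hp : IsIdempotentElem p)
    (hS : ∀ s ∈ S, s * p = p * s * p) : Subalgebra R A where
  carrier := {t | ∃ s ∈ S, ∃ x, s + p * x * (1 - p) = t}
  add_mem' := by
    rintro _ _ ⟨s, hs, x, rfl⟩ ⟨r, hr, y, rfl⟩
    exact ⟨s + r, add_mem hs hr, x + y, by noncomm_ring⟩
  mul_mem' := by
    rintro _ _ ⟨s, hs, x, rfl⟩ ⟨r, hr, y, rfl⟩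
    refine ⟨s * r, mul_mem hs hr, s * p * y + x * (1 - p) * r, ?_⟩
    calc s * r + p * (s * p * y + x * (1 - p) * r) * (1 - p)
        = s * r + p * (s * p * y + x * (1 - p) * r) * (1 - p) + (s * p - p * s * p) * y * (1 - p)
          + p * x * ((1 - p) * r * p) + p * x * ((1 - p) * p) * y * (1 - p) := by
          rw [sub_eq_zero.2 (hS s hs), one_sub_mul_mul_eq_zero (hS r hr), hp.one_sub_mul_self]
          simp
      _ = (s + p * x * (1 - p)) * (r + p * y * (1 - p)) := by noncomm_ring
  algebraMap_mem' r := ⟨algebraMap R A r, S.algebraMap_mem r, 0, by simp⟩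

variable {hp : IsIdempotentElem p} {hS : ∀ s ∈ S, s * p = p * s * p}

theorem le_addCorner : S ≤ S.addCorner hp hS :=
  fun s hs ↦ ⟨s, hs, 0, by simp⟩

theorem mul_mul_one_sub_mem_addCorner (x : A) : p * x * (1 - p) ∈ S.addCorner hp hS :=
  ⟨0, zero_mem S, x, zero_add _⟩

theorem one_sub_mul_mul_eq_zero_of_mem_addCorner {t : A} (ht : t ∈ S.addCorner hp hS) :
    (1 - p) * t * p = 0 := by
  obtain ⟨s, hs, x, rfl⟩ := ht
  calc (1 - p) * (s + p * x * (1 - p)) * p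
      = (1 - p) * s * p + (1 - p) * p * x * ((1 - p) * p) := by noncomm_ring
    _ = 0 := by rw [one_sub_mul_mul_eq_zero (hS s hs), hp.one_sub_mul_self]; simp

theorem mem_of_mem_addCorner_of_star_mem [StarRing A] (hpS : p ∈ S) (hp' : IsSelfAdjoint p)
    {t : A} (ht : t ∈ S.addCorner hp hS) (ht' : star t ∈ S.addCorner hp hS) : t ∈ S := by
  obtain ⟨s, hs, x, rfl⟩ := ht
  have hq' : IsSelfAdjoint (1 - p) := (IsSelfAdjoint.one A).sub hp'
  have hcorner : p * (s + p * x * (1 - p)) * (1 - p) = 0 := by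
    simpa only [star_mul, star_star, hp'.star_eq, hq'.star_eq, star_zero, mul_assoc] using
      congrArg star (one_sub_mul_mul_eq_zero_of_mem_addCorner ht')
  have hx : p * x * (1 - p) = -(p * s * (1 - p)) := by
    rw [eq_neg_iff_add_eq_zero, add_comm, ← hcorner]
    calc p * s * (1 - p) + p * x * (1 - p)
        = p * s * (1 - p) + (p * p) * x * ((1 - p) * (1 - p)) := by
          rw [hp.eq, hp.one_sub.eq]
      _ = p * (s + p * x * (1 - p)) * (1 - p) := by noncomm_ring
  rw [hx, ← sub_eq_add_neg]
  exact sub_mem hs (mul_mem (mul_mem hpS hs) (sub_mem (one_mem S) hpS))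

end Subalgebra

section Triangular

variable {H : Type*} [NormedAddCommGroup H] [InnerProductSpace ℂ H] [CompleteSpace H]
  {S : Subalgebra ℂ (H →L[ℂ] H)} {p : H →L[ℂ] H}

theorem InLat.isStarProjection (hp : InLat S p) : IsStarProjection p :=
  ⟨hp.1, by rw [IsSelfAdjoint, star_eq_adjoint, hp.2.1]⟩

theorem InLat.mem_diagonal (hS : IsTriangular S) (hp : InLat S p) : p ∈ diagonal S :=
  hS.2 p fun a ha ↦
    hp.isStarProjection.isSelfAdjoint.commute_of_mul_eq_mul_mul (hp.2.2 a ha.1)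
      (by rw [star_eq_adjoint]; exact hp.2.2 _ ha.2)

theorem diagonal_addCorner (hpS : p ∈ S) (hp : IsStarProjection p)
    (hS : ∀ s ∈ S, s * p = p * s * p) :
    diagonal (S.addCorner hp.isIdempotentElem hS) = diagonal S := by
  refine Set.Subset.antisymm (fun t ⟨ht, ht'⟩ ↦ ⟨?_, ?_⟩) fun t ⟨ht, ht'⟩ ↦
    ⟨Subalgebra.le_addCorner ht, Subalgebra.le_addCorner ht'⟩
  · rw [← star_eq_adjoint] at ht'
    exact Subalgebra.mem_of_mem_addCorner_of_star_mem hpS hp.isSelfAdjoint ht ht'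
  · rw [← star_eq_adjoint] at ht' ⊢
    exact Subalgebra.mem_of_mem_addCorner_of_star_mem hpS hp.isSelfAdjoint ht'
      (by rwa [star_star])

theorem IsTriangular.addCorner (hT : IsTriangular S) (hpS : p ∈ S) (hp : IsStarProjection p)
    (hS : ∀ s ∈ S, s * p = p * s * p) : IsTriangular (S.addCorner hp.isIdempotentElem hS) := by
  rw [IsTriangular, diagonal_addCorner hpS hp hS]
  exact hT

theorem IsMaxTriangular.mul_mul_one_sub_mem (hS : IsMaxTriangular S) (hp : InLat S p)
    (x : H →L[ℂ] H) : p * x * (1 - p) ∈ S := by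
  have hpS : p ∈ S := (hp.mem_diagonal hS.1).1
  have hT := hS.1.addCorner hpS hp.isStarProjection hp.2.2
  rw [hS.2 _ hT Subalgebra.le_addCorner]
  exact Subalgebra.mul_mul_one_sub_mem_addCorner x

end Triangular

/-- If `S` is maximal triangular, `p ∈ lat(S)`, and `ξ ≠ 0` with `p ξ = 0`, then `S ξ`
contains the range of `p`: every `η` with `p η = η` is of the form `a ξ` for some `a ∈ S`. -/
theorem range_subset_orbit {H : Type*} [NormedAddCommGroup H] [InnerProductSpace ℂ H]
    [CompleteSpace H] {S : Subalgebra ℂ (H →L[ℂ] H)} (hS : IsMaxTriangular S)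
    {p : H →L[ℂ] H} (hp : InLat S p) {ξ : H} (hξ : ξ ≠ 0) (hpξ : p ξ = 0)
    (η : H) (hη : p η = η) :
    ∃ a ∈ S, a ξ = η := by
  obtain ⟨x, hx⟩ := exists_continuousLinearMap_apply_eq (𝕜 := ℂ) hξ η
  refine ⟨p * x * (1 - p), hS.mul_mul_one_sub_mem hp x, ?_⟩
  simp [hpξ, hx, hη]
end

section
/- Let S be a maximal triangular subalgebra of B(H) and let δ : S → B(H) be a derivation. If b, c ∈ B(H) both implement δ, i.e., δ(a) = b a − a b = c a − a c for all a ∈ S, then b − c is a complex scalar multiple of the identity operator. -/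
set_option maxHeartbeats 1000000
set_option synthInstance.maxHeartbeats 400000

/-- A derivation from a subalgebra `A` of `B(H)` into `B(H)`: a linear map obeying the
Leibniz product rule on `A`. -/
def IsDerivationOn {H : Type*} [NormedAddCommGroup H] [InnerProductSpace ℂ H]
    (A : Subalgebra ℂ (H →L[ℂ] H)) (δ : A →ₗ[ℂ] (H →L[ℂ] H)) : Prop :=
  ∀ a b : A, δ (a * b) = δ a * (b : H →L[ℂ] H) + (a : H →L[ℂ] H) * δ b

/-!
If `b` and `c` implement the same derivation, `d = b - c` commutes with `S`, so by maximal
abelianness `d` and `d*` lie in the diagonal of `S`: `d` is normal and, by Fuglede's theorem,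
every continuous function of `d` commutes with `S`. If the spectrum of `d` contained two points,
plateau functions around them would give nonzero self-adjoint operators `p, q` commuting with `S`
with `q p = 0`. Then `S + p B(H) q` is an algebra with the same diagonal as `S`, hence equals `S`,
and commuting its corner past a plateau operator that is `1` near `q` and `0` near `p` gives
`p x q = 0` for every `x`, which is impossible. So the spectrum of `d` is a point and `d` a scalar.
-/

theorem ContinuousLinearMap.eq_zero_or_eq_zero_of_forall_mul_mul_eq_zero {𝕜 V : Type*}
    [Field 𝕜] [TopologicalSpace 𝕜] [AddCommGroup V] [TopologicalSpace V] [Module 𝕜 V]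
    [ContinuousSMul 𝕜 V] [SeparatingDual 𝕜 V] {A B : V →L[𝕜] V}
    (h : ∀ x : V →L[𝕜] V, A * x * B = 0) : A = 0 ∨ B = 0 := by
  by_contra! hAB
  obtain ⟨u, hu⟩ := DFunLike.ne_iff.1 hAB.1
  obtain ⟨v, hv⟩ := DFunLike.ne_iff.1 hAB.2
  obtain ⟨f, hf⟩ := SeparatingDual.exists_ne_zero (R := 𝕜) hv
  have key : f (B v) • A u = 0 := by simpa using congr($(h (f.smulRight u)) v)
  exact smul_ne_zero hf hu key

section Plateau

variable {X : Type*} [PseudoMetricSpace X] {c c' z : X} {r r' R : ℝ}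

noncomputable def plateau (c : X) (r : ℝ) (z : X) : ℂ :=
  ((max 0 (min 1 (2 - dist z c / r)) : ℝ) : ℂ)

theorem continuous_plateau (c : X) (r : ℝ) : Continuous (plateau c r) := by
  unfold plateau; fun_prop

theorem star_plateau (c : X) (r : ℝ) (z : X) : star (plateau c r z) = plateau c r z :=
  Complex.conj_ofReal _

theorem plateau_eq_one (hr : 0 < r) (h : dist z c ≤ r) : plateau c r z = 1 := by
  have : dist z c / r ≤ 1 := (div_le_one hr).2 h
  simp only [plateau, min_eq_left (by linarith : (1 : ℝ) ≤ 2 - dist z c / r),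
    max_eq_right zero_le_one, Complex.ofReal_one]

theorem plateau_eq_zero (hr : 0 < r) (h : 2 * r ≤ dist z c) : plateau c r z = 0 := by
  have : 2 ≤ dist z c / r := (le_div_iff₀ hr).2 (by linarith)
  simp only [plateau, min_eq_right (by linarith : 2 - dist z c / r ≤ 1),
    max_eq_left (by linarith : 2 - dist z c / r ≤ 0), Complex.ofReal_zero]

theorem plateau_mul_plateau_of_two_mul_le (hr : 0 < r) (hR : 2 * r ≤ R) :
    plateau c R z * plateau c r z = plateau c r z := by
  rcases le_or_gt (2 * r) (dist z c) with h | h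
  · rw [plateau_eq_zero hr h, mul_zero]
  · rw [plateau_eq_one (by linarith) (by linarith), one_mul]

theorem plateau_mul_plateau_eq_zero (hr : 0 < r) (hr' : 0 < r')
    (h : 2 * r + 2 * r' ≤ dist c c') : plateau c r z * plateau c' r' z = 0 := by
  have := dist_triangle_left c c' z
  rcases le_or_gt (2 * r) (dist z c) with hz | hz
  · rw [plateau_eq_zero hr hz, zero_mul]
  · rw [plateau_eq_zero hr' (by linarith), mul_zero]

end Plateau

section CFC

variable {A : Type*} [CStarAlgebra A]

theorem cfc_ne_zero {f : ℂ → ℂ} {a : A} [IsStarNormal a] {x : ℂ} (hx : x ∈ spectrum ℂ a)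
    (hfx : f x ≠ 0) (hf : Continuous f) : cfc f a ≠ 0 := fun h ↦
  hfx <| eqOn_of_cfc_eq_cfc (g := 0) (h.trans (cfc_zero ℂ a).symm) hf.continuousOn
    continuousOn_const ‹_› hx

theorem cfc_mem_centralizer {s : Set A} {a : A} [ha : IsStarNormal a]
    (has : a ∈ Set.centralizer s) (f : ℂ → ℂ) : cfc f a ∈ Set.centralizer s :=
  fun b hb ↦ (Commute.cfc (has b hb).symm (ha.commute_star_left (has b hb).symm) f).symm.eq

end CFC

section CornerExtension

variable {R A : Type*} [CommSemiring R] [Semiring A] [Algebra R A] {S : Subalgebra R A}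
  {p q : A}

def cornerExtension (S : Subalgebra R A) (hp : p ∈ Set.centralizer (S : Set A))
    (hq : q ∈ Set.centralizer (S : Set A)) (hqp : q * p = 0) : Subalgebra R A where
  carrier := {t | ∃ a ∈ S, ∃ y, t = a + p * y * q}
  mul_mem' := by
    rintro _ _ ⟨a, ha, y, rfl⟩ ⟨a', ha', y', rfl⟩
    refine ⟨a * a', S.mul_mem ha ha', a * y' + y * a', ?_⟩
    have hpq : p * y * q * (p * y' * q) = 0 := by
      simp only [mul_assoc, ← mul_assoc q p, hqp, zero_mul, mul_zero]
    have hap : a * (p * y' * q) = p * (a * y') * q := by simp only [← mul_assoc, hp a ha]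
    have hqa : p * y * q * a' = p * (y * a') * q := by simp only [mul_assoc, ← hq a' ha']
    rw [mul_add, add_mul, add_mul, hpq, hap, hqa, mul_add, add_mul]
    abel
  add_mem' := by
    rintro _ _ ⟨a, ha, y, rfl⟩ ⟨a', ha', y', rfl⟩
    exact ⟨a + a', S.add_mem ha ha', y + y', by rw [mul_add, add_mul]; abel⟩
  algebraMap_mem' r := ⟨algebraMap R A r, S.algebraMap_mem r, 0, by simp⟩

variable {hp : p ∈ Set.centralizer (S : Set A)} {hq : q ∈ Set.centralizer (S : Set A)}
  {hqp : q * p = 0}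

theorem le_cornerExtension : S ≤ cornerExtension S hp hq hqp :=
  fun a ha ↦ ⟨a, ha, 0, by simp⟩

theorem mul_mul_mem_cornerExtension (y : A) : p * y * q ∈ cornerExtension S hp hq hqp :=
  ⟨0, S.zero_mem, y, by simp⟩

theorem mem_of_mem_cornerExtension_of_star_mem [StarRing A] {P Q : A}
    (hp' : IsSelfAdjoint p) (hq' : IsSelfAdjoint q) (hQ : IsSelfAdjoint Q)
    (hQS : Q ∈ Set.centralizer (S : Set A)) (hpP : p * P = p) (hQp : Q * p = 0) (hQq : Q * q = q)
    (hQP : Q * P = 0) {t : A} (ht : t ∈ cornerExtension S hp hq hqp)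
    (hst : star t ∈ cornerExtension S hp hq hqp) : t ∈ S := by
  obtain ⟨a, ha, y, rfl⟩ := ht
  obtain ⟨a', ha', y', hst⟩ := hst
  -- `x ↦ Q * x * P` kills `S`, `star S` and `p A q`, but fixes `q A p`.
  have hQa : Q * star a = star a * Q := by
    simpa [hQ.star_eq] using congr(star $(hQS a ha))
  have hlhs : Q * star (a + p * y * q) * P = q * star y * p := by
    simp only [star_add, star_mul, hp'.star_eq, hq'.star_eq, mul_add, add_mul, ← mul_assoc,
      hQa, hQq]
    simp only [mul_assoc, hQP, hpP, mul_zero, zero_add]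
  have hrhs : Q * (a' + p * y' * q) * P = 0 := by
    simp only [mul_add, ← mul_assoc, ← hQS a' ha', hQp, zero_mul, add_zero]
    simp only [mul_assoc, hQP, mul_zero]
  have hqyp : q * star y * p = 0 := by rw [← hlhs, hst, hrhs]
  have hpyq : p * y * q = 0 := by
    simpa [hp'.star_eq, hq'.star_eq, mul_assoc] using congr(star $hqyp)
  simpa [hpyq] using ha

end CornerExtension

section MaxTriangular

variable {H : Type*} [NormedAddCommGroup H] [InnerProductSpace ℂ H] [CompleteSpace H]
  {S : Subalgebra ℂ (H →L[ℂ] H)} {d : H →L[ℂ] H}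

theorem diagonal_cornerExtension {p q P Q : H →L[ℂ] H} {hp : p ∈ Set.centralizer (S : Set _)}
    {hq : q ∈ Set.centralizer (S : Set _)} {hqp : q * p = 0}
    (hp' : IsSelfAdjoint p) (hq' : IsSelfAdjoint q) (hQ : IsSelfAdjoint Q)
    (hQS : Q ∈ Set.centralizer (S : Set _)) (hpP : p * P = p) (hQp : Q * p = 0) (hQq : Q * q = q)
    (hQP : Q * P = 0) : diagonal (cornerExtension S hp hq hqp) = diagonal S := by
  ext t
  refine ⟨fun ⟨ht, hst⟩ ↦ ⟨?_, ?_⟩,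
    fun ⟨ht, hst⟩ ↦ ⟨le_cornerExtension ht, le_cornerExtension hst⟩⟩
  · exact mem_of_mem_cornerExtension_of_star_mem hp' hq' hQ hQS hpP hQp hQq hQP ht hst
  · refine mem_of_mem_cornerExtension_of_star_mem hp' hq' hQ hQS hpP hQp hQq hQP hst ?_
    rwa [← ContinuousLinearMap.star_eq_adjoint, star_star]

/-- Maximality forces the corner `p B(H) q` into `S`, where `Q` must commute with it. -/
theorem IsMaxTriangular.mul_mul_eq_zero (hS : IsMaxTriangular S) {p q P Q : H →L[ℂ] H}
    (hp' : IsSelfAdjoint p) (hq' : IsSelfAdjoint q) (hQ : IsSelfAdjoint Q)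
    (hpS : p ∈ Set.centralizer (S : Set _)) (hqS : q ∈ Set.centralizer (S : Set _))
    (hQS : Q ∈ Set.centralizer (S : Set _)) (hpP : p * P = p) (hQp : Q * p = 0) (hQq : Q * q = q)
    (hQP : Q * P = 0) (x : H →L[ℂ] H) : p * x * q = 0 := by
  have hqQ : q * Q = q := by simpa [hQ.star_eq, hq'.star_eq] using congr(star $hQq)
  have hqp : q * p = 0 := by rw [← hqQ, mul_assoc, hQp, mul_zero]
  have hT : IsTriangular (cornerExtension S hpS hqS hqp) := by
    rw [IsTriangular, diagonal_cornerExtension hp' hq' hQ hQS hpP hQp hQq hQP]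
    exact hS.1
  have hmem : p * x * q ∈ S :=
    (hS.2 _ hT le_cornerExtension).symm ▸ mul_mul_mem_cornerExtension x
  calc p * x * q = p * x * q * Q := by rw [mul_assoc (p * x) q Q, hqQ]
    _ = Q * (p * x * q) := hQS _ hmem
    _ = 0 := by rw [← mul_assoc, ← mul_assoc, hQp, zero_mul, zero_mul]

theorem IsMaxTriangular.mem_diagonal_of_mem_centralizer (hS : IsMaxTriangular S)
    (hd : d ∈ Set.centralizer (S : Set _)) : d ∈ diagonal S :=
  hS.1.2 d fun a ha ↦ hd a ha.1

theorem IsMaxTriangular.isStarNormal_of_mem_centralizer (hS : IsMaxTriangular S)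
    (hd : d ∈ Set.centralizer (S : Set _)) : IsStarNormal d := by
  have hdD := hS.mem_diagonal_of_mem_centralizer hd
  have hsdD : star d ∈ diagonal S :=
    ⟨hdD.2, by rw [← ContinuousLinearMap.star_eq_adjoint, star_star]; exact hdD.1⟩
  exact ⟨hS.1.1 _ hsdD _ hdD⟩

theorem IsMaxTriangular.spectrum_subsingleton (hS : IsMaxTriangular S)
    (hd : d ∈ Set.centralizer (S : Set _)) : (spectrum ℂ d).Subsingleton := by
  have := hS.isStarNormal_of_mem_centralizer hd
  intro l hl m hm
  by_contra hne
  set r := dist l m / 8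
  have hr : 0 < r := by have := dist_pos.2 hne; positivity
  set e : ℂ → ℝ → H →L[ℂ] H := fun c ρ ↦ cfc (plateau c ρ) d
  have he_mul (c c' : ℂ) (ρ ρ' : ℝ) :
      e c ρ * e c' ρ' = cfc (fun z ↦ plateau c ρ z * plateau c' ρ' z) d :=
    (cfc_mul _ _ d (continuous_plateau c ρ).continuousOn
      (continuous_plateau c' ρ').continuousOn).symm
  have he_sa (c : ℂ) (ρ : ℝ) : IsSelfAdjoint (e c ρ) :=
    isSelfAdjoint_iff.2 <| by rw [← cfc_star]; exact cfc_congr fun z _ ↦ star_plateau c ρ z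
  have he_mul_self (c : ℂ) : e c (2 * r) * e c r = e c r := by
    rw [he_mul]
    exact cfc_congr fun z _ ↦ plateau_mul_plateau_of_two_mul_le hr le_rfl
  have he_mul_eq_zero (ρ ρ' : ℝ) (hρ : 0 < ρ) (hρ' : 0 < ρ')
      (h : 2 * ρ + 2 * ρ' ≤ 8 * r) :
      e m ρ * e l ρ' = 0 := by
    rw [he_mul, ← cfc_zero ℂ d]
    refine cfc_congr fun z _ ↦ plateau_mul_plateau_eq_zero hρ hρ' ?_
    rwa [dist_comm, show dist l m = 8 * r by ring]
  have hcorner := hS.mul_mul_eq_zero (P := e l (2 * r))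
    (he_sa l r) (he_sa m r) (he_sa m (2 * r))
    (cfc_mem_centralizer hd _) (cfc_mem_centralizer hd _) (cfc_mem_centralizer hd _)
    ((cfc_commute_cfc _ _ d).eq.trans (he_mul_self l))
    (he_mul_eq_zero _ _ (by positivity) hr (by linarith)) (he_mul_self m)
    (he_mul_eq_zero _ _ (by positivity) (by positivity) (by linarith))
  have he_ne_zero (c : ℂ) (hc : c ∈ spectrum ℂ d) : e c r ≠ 0 :=
    cfc_ne_zero hc (by simp [plateau_eq_one hr (dist_self c ▸ hr.le)]) (continuous_plateau c r)
  rcases ContinuousLinearMap.eq_zero_or_eq_zero_of_forall_mul_mul_eq_zero hcorner with h | h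
  exacts [he_ne_zero l hl h, he_ne_zero m hm h]

theorem IsMaxTriangular.exists_eq_smul_one_of_mem_centralizer (hS : IsMaxTriangular S)
    (hd : d ∈ Set.centralizer (S : Set _)) : ∃ α : ℂ, d = α • 1 := by
  have := hS.isStarNormal_of_mem_centralizer hd
  obtain ⟨α, hα⟩ : ∃ α, spectrum ℂ d ⊆ {α} := by
    rcases (hS.spectrum_subsingleton hd).eq_empty_or_singleton with h | ⟨α, h⟩
    exacts [⟨0, h.symm ▸ Set.empty_subset _⟩, ⟨α, h.subset⟩]
  exact ⟨α, (CFC.eq_algebraMap_of_spectrum_subset_singleton d α hα).trans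
    (Algebra.algebraMap_eq_smul_one α)⟩

end MaxTriangular

theorem implementing_unique_upto_scalar_general {H : Type*} [NormedAddCommGroup H]
    [InnerProductSpace ℂ H] [CompleteSpace H] {S : Subalgebra ℂ (H →L[ℂ] H)}
    (hS : IsMaxTriangular S) (δ : S →ₗ[ℂ] (H →L[ℂ] H))
    (b c : H →L[ℂ] H)
    (hb : ∀ a : S, δ a = b * (a : H →L[ℂ] H) - (a : H →L[ℂ] H) * b)
    (hc : ∀ a : S, δ a = c * (a : H →L[ℂ] H) - (a : H →L[ℂ] H) * c) :
    ∃ α : ℂ, b - c = α • (1 : H →L[ℂ] H) := by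
  refine hS.exists_eq_smul_one_of_mem_centralizer fun a ha ↦ ?_
  have h : b * a - a * b = c * a - a * c := (hb ⟨a, ha⟩).symm.trans (hc ⟨a, ha⟩)
  rw [mul_sub, sub_mul, sub_eq_sub_iff_sub_eq_sub, ← neg_sub (b * a), h, neg_sub]

/-- Any two operators implementing the same derivation on a maximal triangular
subalgebra differ by a scalar multiple of the identity. -/
theorem implementing_unique_upto_scalar {H : Type*} [NormedAddCommGroup H]
    [InnerProductSpace ℂ H] [CompleteSpace H] {S : Subalgebra ℂ (H →L[ℂ] H)}
    (hS : IsMaxTriangular S) (δ : S →ₗ[ℂ] (H →L[ℂ] H)) (hδ : IsDerivationOn S δ)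
    (b c : H →L[ℂ] H)
    (hb : ∀ a : S, δ a = b * (a : H →L[ℂ] H) - (a : H →L[ℂ] H) * b)
    (hc : ∀ a : S, δ a = c * (a : H →L[ℂ] H) - (a : H →L[ℂ] H) * c) :
    ∃ α : ℂ, b - c = α • (1 : H →L[ℂ] H) :=
  implementing_unique_upto_scalar_general hS δ b c hb hc
end
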